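/- Replacing each negative arc of a labeled directed graph by the arc itself, and each positive arc (a,b) by two arcs (a, m) and (m, b) through a fresh intermediate node m, yields a graph that contains an odd-length directed cycle if and only if the original graph contains a directed cycle with an odd number of negative arcs. -/

import Mathlib

section Aux

variable {V : Type} (E : V → V → Prop) (neg : V → V → Bool)
    (E' : (V ⊕ V × V) → (V ⊕ V × V) → Prop)

lemma card_filter_range_succ' (P : ℕ → Prop) [DecidablePred P] (m : ℕ) :
    ((Finset.range (m+1)).filter P).card =
      ((Finset.range m).filter P).card + if P m then 1 else 0 := by
  rw [Finset.range_add_one, Finset.filter_insert]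
  split
  · rw [Finset.card_insert_of_notMem (by simp)]
  · rfl

lemma lemA
    (hE' : ∀ x y, E' x y ↔
      ((∃ a b, E a b ∧ neg a b = true ∧ x = Sum.inl a ∧ y = Sum.inl b) ∨
       (∃ a b, E a b ∧ neg a b = false ∧
         ((x = Sum.inl a ∧ y = Sum.inr (a, b)) ∨ (x = Sum.inr (a, b) ∧ y = Sum.inl b))))) :
    ∀ k (f : ℕ → V ⊕ V × V) (a v : V), f 0 = Sum.inl a → f k = Sum.inl v →
      (∀ i < k, E' (f i) (f (i+1))) →
      ∃ (m : ℕ) (g : ℕ → V), g 0 = a ∧ g m = v ∧ (∀ i < m, E (g i) (g (i+1))) ∧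
        ((Finset.range m).filter (fun i => neg (g i) (g (i+1)) = true)).card % 2 = k % 2 := by
  intro k
  induction k using Nat.strong_induction_on with
  | _ k IH =>
    intro f a v h0 hk hstep
    match k with
    | 0 =>
      refine ⟨0, fun _ => a, rfl, ?_, by omega, by simp⟩
      have : Sum.inl (α := V) (β := V × V) a = Sum.inl v := by rw [← h0, ← hk]
      exact Sum.inl.inj this
    | (k' + 1) =>
      have hlast := (hE' _ _).1 (hstep k' (by omega))
      rcases hlast with ⟨a', b, hab, hneg, hfa, hfb⟩ | ⟨a', b, hab, hneg, hcase⟩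
      · -- negative arc at the end
        rw [hk] at hfb
        have hbv : b = v := (Sum.inl.inj hfb).symm
        obtain ⟨m, g, hg0, hgm, hgstep, hcard⟩ :=
          IH k' (by omega) f a a' h0 hfa (fun i hi => hstep i (by omega))
        refine ⟨m + 1, fun i => if i = m + 1 then v else g i, by simp [hg0], by simp, ?_, ?_⟩
        · intro i hi
          rcases Nat.lt_or_ge i m with h | h
          · simpa [show i ≠ m + 1 by omega, show i + 1 ≠ m + 1 by omega, show i ≠ m by omega] using hgstep i h
          · have him : i = m := by omega
            subst him
            simp [show i ≠ i + 1 by omega, hgm, hbv ▸ hab]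
        · have hP : (Finset.range m).filter
              (fun i => neg (if i = m + 1 then v else g i) (if i + 1 = m + 1 then v else g (i+1)) = true)
              = (Finset.range m).filter (fun i => neg (g i) (g (i+1)) = true) :=
            Finset.filter_congr (fun i hi => by
              simp only [Finset.mem_range] at hi
              simp [show i ≠ m + 1 by omega, show i + 1 ≠ m + 1 by omega, show i ≠ m by omega])
          rw [card_filter_range_succ', hP]
          rw [if_pos (by simp [hgm, show m ≠ m + 1 by omega, hbv ▸ hneg])]
          omega
      · -- positive arc at the end
        rcases hcase with ⟨hfa, hfb⟩ | ⟨hfa, hfb⟩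
        · rw [hk] at hfb; exact absurd hfb (by simp)
        · rw [hk] at hfb
          have hbv : b = v := (Sum.inl.inj hfb).symm
          match k' with
          | 0 => rw [h0] at hfa; exact absurd hfa (by simp)
          | (k'' + 1) =>
            have hprev := (hE' _ _).1 (hstep k'' (by omega))
            have hfk'' : f (k'' + 1) = Sum.inr (a', b) := hfa
            rcases hprev with ⟨a2, b2, _, _, _, hfb2⟩ | ⟨a2, b2, hab2, hneg2, hcase2⟩
            · rw [hfk''] at hfb2; exact absurd hfb2 (by simp)
            · rcases hcase2 with ⟨hx2, hy2⟩ | ⟨hx2, hy2⟩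
              · rw [hfk''] at hy2
                have hpair := Sum.inr.inj hy2.symm
                have ha2 : a2 = a' := (Prod.ext_iff.1 hpair).1
                rw [ha2] at hx2
                obtain ⟨m, g, hg0, hgm, hgstep, hcard⟩ :=
                  IH k'' (by omega) f a a' h0 hx2 (fun i hi => hstep i (by omega))
                refine ⟨m + 1, fun i => if i = m + 1 then v else g i, by simp [hg0], by simp, ?_, ?_⟩
                · intro i hi
                  rcases Nat.lt_or_ge i m with h | h
                  · simpa [show i ≠ m + 1 by omega, show i + 1 ≠ m + 1 by omega, show i ≠ m by omega] using hgstep i h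
                  · have him : i = m := by omega
                    subst him
                    simp [show i ≠ i + 1 by omega, hgm, hbv ▸ hab]
                · have hP : (Finset.range m).filter
                      (fun i => neg (if i = m + 1 then v else g i) (if i + 1 = m + 1 then v else g (i+1)) = true)
                      = (Finset.range m).filter (fun i => neg (g i) (g (i+1)) = true) :=
                    Finset.filter_congr (fun i hi => by
                      simp only [Finset.mem_range] at hi
                      simp [show i ≠ m + 1 by omega, show i + 1 ≠ m + 1 by omega, show i ≠ m by omega])
                  rw [card_filter_range_succ', hP]
                  rw [if_neg (by simp [hgm, show m ≠ m + 1 by omega, hbv ▸ hneg])]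
                  omega
              · rw [hfk''] at hy2; exact absurd hy2 (by simp)

end Aux

section Aux2

variable {V : Type} (E : V → V → Prop) (neg : V → V → Bool)
    (E' : (V ⊕ V × V) → (V ⊕ V × V) → Prop)

lemma lemB
    (hE' : ∀ x y, E' x y ↔
      ((∃ a b, E a b ∧ neg a b = true ∧ x = Sum.inl a ∧ y = Sum.inl b) ∨
       (∃ a b, E a b ∧ neg a b = false ∧
         ((x = Sum.inl a ∧ y = Sum.inr (a, b)) ∨ (x = Sum.inr (a, b) ∧ y = Sum.inl b))))) :
    ∀ k (g : ℕ → V), (∀ i < k, E (g i) (g (i+1))) →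
      ∃ (m : ℕ) (f : ℕ → V ⊕ V × V), f 0 = Sum.inl (g 0) ∧ f m = Sum.inl (g k) ∧
        (∀ i < m, E' (f i) (f (i+1))) ∧
        m % 2 = ((Finset.range k).filter (fun i => neg (g i) (g (i+1)) = true)).card % 2 := by
  intro k
  induction k with
  | zero => exact fun g _ => ⟨0, fun _ => Sum.inl (g 0), rfl, rfl, by omega, by simp⟩
  | succ k IH =>
    intro g hstep
    obtain ⟨m, f, hf0, hfm, hfstep, hpar⟩ := IH g (fun i hi => hstep i (by omega))
    have harc : E (g k) (g (k+1)) := hstep k (by omega)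
    by_cases hneg : neg (g k) (g (k+1)) = true
    · refine ⟨m + 1, fun i => if i = m + 1 then Sum.inl (g (k+1)) else f i, by simp [hf0],
        by simp, ?_, ?_⟩
      · intro i hi
        rcases Nat.lt_or_ge i m with h | h
        · simpa [show i ≠ m + 1 by omega, show i + 1 ≠ m + 1 by omega, show i ≠ m by omega] using hfstep i h
        · have him : i = m := by omega
          subst him
          simp only [show i ≠ i + 1 by omega, if_neg, if_pos]
          rw [hE']
          exact Or.inl ⟨g k, g (k+1), harc, hneg, by simp [hfm, show i ≠ i + 1 by omega], rfl⟩
      · rw [card_filter_range_succ']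
        rw [if_pos hneg]
        omega
    · refine ⟨m + 2, fun i => if i = m + 1 then Sum.inr (g k, g (k+1))
        else if i = m + 2 then Sum.inl (g (k+1)) else f i, by simp [hf0], by simp, ?_, ?_⟩
      · intro i hi
        rcases Nat.lt_or_ge i m with h | h
        · simpa [show i ≠ m + 1 by omega, show i ≠ m + 2 by omega,
            show i + 1 ≠ m + 1 by omega, show i + 1 ≠ m + 2 by omega, show i ≠ m by omega] using hfstep i h
        · rcases Nat.lt_or_ge i (m+1) with h2 | h2
          · have him : i = m := by omega
            subst him
            simp only [show i ≠ i + 1 by omega, show i ≠ i + 2 by omega, if_neg, if_pos]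
            rw [hE']
            refine Or.inr ⟨g k, g (k+1), harc, by simpa using hneg, Or.inl ⟨?_, by simp⟩⟩
            simp [hfm, show i ≠ i + 1 by omega, show i ≠ i + 2 by omega]
          · have him : i = m + 1 := by omega
            subst him
            rw [hE']
            refine Or.inr ⟨g k, g (k+1), harc, by simpa using hneg, Or.inr ⟨by simp, ?_⟩⟩
            simp [show m + 1 + 1 ≠ m + 1 by omega]
      · rw [card_filter_range_succ']
        rw [if_neg hneg]
        omega

end Aux2


/-- Replacing each negative arc by itself and each positive arc (a,b) by (a,m),(m,b)
through a fresh node m yields a graph with an odd directed cycle iff the original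
graph has a directed cycle with an odd number of negative arcs. -/
theorem odd_cycle_transformed_iff_odd_negative_cycle {V : Type}
    (E : V → V → Prop) (neg : V → V → Bool)
    (E' : (V ⊕ V × V) → (V ⊕ V × V) → Prop)
    (hE' : ∀ x y, E' x y ↔
      ((∃ a b, E a b ∧ neg a b = true ∧ x = Sum.inl a ∧ y = Sum.inl b) ∨
       (∃ a b, E a b ∧ neg a b = false ∧
         ((x = Sum.inl a ∧ y = Sum.inr (a, b)) ∨ (x = Sum.inr (a, b) ∧ y = Sum.inl b))))) :
    (∃ (k : ℕ) (f : ℕ → V ⊕ V × V), Odd k ∧ (∀ i < k, E' (f i) (f (i + 1))) ∧ f k = f 0) ↔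
      (∃ (k : ℕ) (f : ℕ → V), 0 < k ∧ (∀ i < k, E (f i) (f (i + 1))) ∧ f k = f 0 ∧
        Odd (((Finset.range k).filter (fun i => neg (f i) (f (i + 1)) = true)).card)) := by
  constructor
  · rintro ⟨k, f, hodd, hstep, hclose⟩
    have hk0 : 0 < k := hodd.pos
    have key : ∃ (f2 : ℕ → V ⊕ V × V) (b : V), f2 0 = Sum.inl b ∧ f2 k = Sum.inl b ∧
        ∀ i < k, E' (f2 i) (f2 (i+1)) := by
      cases h : f 0 with
      | inl a => exact ⟨f, a, h, by rw [hclose, h], hstep⟩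
      | inr p =>
        have h01 := (hE' _ _).1 (hstep 0 hk0)
        rcases h01 with ⟨a, b, _, _, hx, _⟩ | ⟨a, b, hab, hneg, hcase⟩
        · rw [h] at hx; exact absurd hx (by simp)
        · rcases hcase with ⟨hx, _⟩ | ⟨hx, hy⟩
          · rw [h] at hx; exact absurd hx (by simp)
          · refine ⟨fun i => if i = k then f 1 else f (i+1), b,
              by simpa [show (0:ℕ) ≠ k by omega] using hy, by simpa using hy, ?_⟩
            intro i hi
            show E' (if i = k then f 1 else f (i+1)) (if i + 1 = k then f 1 else f (i+1+1))
            by_cases h2 : i + 1 = k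
            · rw [if_neg (show i ≠ k by omega), if_pos h2, h2, hclose]
              exact hstep 0 hk0
            · rw [if_neg (show i ≠ k by omega), if_neg h2]
              exact hstep (i+1) (by omega)
    obtain ⟨f2, b, h0, hk, hstep2⟩ := key
    obtain ⟨m, g, hg0, hgm, hgstep, hcard⟩ := lemA E neg E' hE' k f2 b b h0 hk hstep2
    have hcodd : Odd (((Finset.range m).filter (fun i => neg (g i) (g (i+1)) = true)).card) := by
      rw [Nat.odd_iff] at hodd ⊢
      omega
    have hm : 0 < m := by
      rcases Nat.eq_zero_or_pos m with h | h
      · exfalso; subst h; simp at hcodd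
      · exact h
    exact ⟨m, g, hm, hgstep, by rw [hgm, hg0], hcodd⟩
  · rintro ⟨k, g, hk, hstep, hclose, hodd⟩
    obtain ⟨m, f, hf0, hfm, hfstep, hpar⟩ := lemB E neg E' hE' k g hstep
    refine ⟨m, f, ?_, hfstep, by rw [hfm, hclose, hf0]⟩
    rw [Nat.odd_iff] at hodd ⊢
    omega
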